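/- arXiv:2304.01824 — 2 statements merged into one kernel-verified Lean document; each statement's English description precedes it below -/
import Mathlib

section
/- (Determinant representation, trigonometric case, first form.) Let q ∈ ℂ with q ≠ 0 and q² ≠ 1, and let y_1,…,y_N ∈ ℂ be nonzero, pairwise distinct, and satisfy q² y_j ≠ y_k for all j ≠ k. Set ã(x) = ∏_{k=1}^N (q x − q^{−1} y_k) and d̃(x) = ∏_{k=1}^N (x − y_k). Let p_1,…,p_N ∈ ℂ[x] be polynomials of degree at most N−1 whose N×N coefficient matrix is invertible. Then there exists a polynomial P ∈ ℂ[x_1,…,x_N] satisfying the trigonometric DWBC conditions such that for all x_1,…,x_N ∈ ℂ: P(x_1,…,x_N) · (∏_{k=1}^N y_k) · det[ p_k(x_j) ]_{j,k=1,…,N} = det[ p_k(x_j) ã(x_j) − q^{−N+2} p_k(q² x_j) d̃(x_j) ]_{j,k=1,…,N}. -/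
/-!
Writing `p_k(x) = ∑_m p_{km} x^m`, the right-hand matrix factors as `[g_m(x_j)] · pᵀ` with
`g_m(x) = x^m (ã(x) - q^{2-N+2m} d̃(x))`, and `[p_k(x_j)]` as the Vandermonde matrix times `pᵀ`.
The alternant `det [g_m(x_j)]` vanishes on every diagonal `x_i = x_j`, so it is the Vandermonde
polynomial `V` times a polynomial `Q`, and `P = Q / ∏ y_k`. Antisymmetry of both alternants makes
`Q` symmetric; `deg g_m ≤ 2N - 2` (for `m = N - 1` the leading terms cancel) and
`deg_{x_i} V = N - 1` bound the degrees of `Q`; at `x_i = y_j`, `x_{i'} = q⁻² y_j` two rows of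
`[g_m(x_j)]` are proportional to `(y_j^m)_m`; and at `x = y`, where `d̃` vanishes,
`[g_m(y_j)]` is the Vandermonde matrix with rows scaled by `ã(y_j)`.
-/

open scoped BigOperators

namespace SixVertexTrig

/-- A polynomial `P ∈ ℂ[x_1,…,x_N]` satisfies the trigonometric DWBC conditions if it is
symmetric, of degree at most `N-1` in each variable, vanishes whenever two of its
arguments equal `y_j` and `q⁻² y_j` (for some `j`), and takes the value
`(q - q⁻¹)^N ∏_{j≠k} (q y_j - q⁻¹ y_k)` at `x = y`.  (Since `P` is required to be
symmetric, the vanishing condition is phrased via an arbitrary pair of distinct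
argument slots carrying the two values.) -/
def TrigCond (N : ℕ) (q : ℂ) (y : Fin N → ℂ) (P : MvPolynomial (Fin N) ℂ) : Prop :=
  P.IsSymmetric ∧
  (∀ j : Fin N, P.degreeOf j ≤ N - 1) ∧
  (∀ (j : Fin N) (x : Fin N → ℂ) (i₁ i₂ : Fin N), i₁ ≠ i₂ →
    x i₁ = y j → x i₂ = (q ^ 2)⁻¹ * y j → MvPolynomial.eval x P = 0) ∧
  MvPolynomial.eval y P =
    (q - q⁻¹) ^ N * ∏ j, ∏ k ∈ Finset.univ.erase j, (q * y j - q⁻¹ * y k)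

/-- The polynomial `p_i(x) = ∑_{j=1}^N p_{ij} x^{j-1}` of degree at most `N-1`,
determined by the row `i` of a coefficient matrix `p`. -/
noncomputable def pval {N : ℕ} (p : Matrix (Fin N) (Fin N) ℂ) (i : Fin N) (x : ℂ) : ℂ :=
  ∑ j, p i j * x ^ (j : ℕ)

/-- `ã(x) = ∏_{k=1}^N (q x - q⁻¹ y_k)`. -/
noncomputable def aTil (N : ℕ) (q : ℂ) (y : Fin N → ℂ) (x : ℂ) : ℂ :=
  ∏ k, (q * x - q⁻¹ * y k)

/-- `d̃(x) = ∏_{k=1}^N (x - y_k)`. -/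
noncomputable def dTil (N : ℕ) (y : Fin N → ℂ) (x : ℂ) : ℂ :=
  ∏ k, (x - y k)

end SixVertexTrig

theorem Polynomial.Monic.natDegree_sub_le_pred {R : Type*} [CommRing R] {p q : Polynomial R}
    {n : ℕ} (hp : p.Monic) (hq : q.Monic) (hpn : p.natDegree = n) (hqn : q.natDegree = n) :
    (p - q).natDegree ≤ n - 1 := by
  rw [natDegree_le_iff_coeff_eq_zero]
  intro m hm
  rw [coeff_sub]
  rcases (show n ≤ m by omega).eq_or_lt with rfl | hlt
  · rw [← hpn, hp.coeff_natDegree, hpn, ← hqn, hq.coeff_natDegree, sub_self]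
  · rw [coeff_eq_zero_of_natDegree_lt (hpn ▸ hlt), coeff_eq_zero_of_natDegree_lt (hqn ▸ hlt),
      sub_self]

theorem Matrix.det_eq_zero_of_row_eq_smul_of_row_eq_smul {n K : Type*} [Fintype n]
    [DecidableEq n] [CommRing K] [NoZeroDivisors K] {M : Matrix n n K} {i j : n} (hij : i ≠ j)
    {v : n → K} {α β : K} (hi : M i = α • v) (hj : M j = β • v) : M.det = 0 := by
  by_cases hα : α = 0
  · exact det_eq_zero_of_row_eq_zero i fun k => by simp [hi, hα]
  refine (mul_eq_zero.mp ?_).resolve_left hα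
  calc α * M.det = (M.updateRow j (α • M j)).det := by
        rw [det_updateRow_smul, updateRow_eq_self]
    _ = (M.updateRow j (β • M i)).det := by rw [hi, hj, smul_comm]
    _ = 0 := by rw [det_updateRow_smul, det_updateRow_eq_zero hij, mul_zero]

/-- The `φ i` play the role of reductions modulo pairwise non-associated primes `h i`. -/
theorem Finset.prod_dvd_of_map_eq_zero {ι A B : Type*} [CommRing A] [CommRing B]
    [NoZeroDivisors B] {s : Finset ι} {h : ι → A} {φ : ι → A →+* B}
    (hdvd : ∀ i ∈ s, ∀ g, φ i g = 0 → h i ∣ g)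
    (hne : ∀ i ∈ s, ∀ j ∈ s, i ≠ j → φ i (h j) ≠ 0) {f : A}
    (hf : ∀ i ∈ s, φ i f = 0) :
    ∏ i ∈ s, h i ∣ f := by
  classical
  induction s using Finset.induction_on generalizing f with
  | empty => exact one_dvd f
  | insert a s has ih =>
    obtain ⟨g, rfl⟩ := hdvd a (mem_insert_self a s) f (hf a (mem_insert_self a s))
    rw [prod_insert has]
    refine mul_dvd_mul_left _ (ih (fun i hi => hdvd i (mem_insert_of_mem hi))
      (fun i hi j hj => hne i (mem_insert_of_mem hi) j (mem_insert_of_mem hj)) fun i hi => ?_)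
    have hfi := hf i (mem_insert_of_mem hi)
    rw [map_mul] at hfi
    exact (mul_eq_zero.mp hfi).resolve_left
      (hne i (mem_insert_of_mem hi) a (mem_insert_self a s) (by rintro rfl; exact has hi))

namespace MvPolynomial

variable {σ R : Type*} [CommRing R]

theorem X_sub_X_dvd_sub_rename_update [DecidableEq σ] (i j : σ) (f : MvPolynomial σ R) :
    X j - X i ∣ f - rename (Function.update id j i) f := by
  induction f using MvPolynomial.induction_on with
  | C a => simp
  | add f g hf hg => simpa only [map_add, add_sub_add_comm] using dvd_add hf hg
  | mul_X f k hf =>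
    have hk : (X j - X i : MvPolynomial σ R) ∣ X k - X (Function.update id j i k) := by
      rcases eq_or_ne k j with rfl | hkj
      · simp
      · simp [Function.update_of_ne hkj]
    rw [map_mul, rename_X]
    calc (X j - X i : MvPolynomial σ R) ∣ (f - rename (Function.update id j i) f) * X k
          + rename (Function.update id j i) f * (X k - X (Function.update id j i k)) :=
          dvd_add (hf.mul_right _) (hk.mul_left _)
      _ = _ := by ring

theorem X_sub_X_dvd_of_rename_update_eq_zero [DecidableEq σ] {i j : σ} {f : MvPolynomial σ R}
    (hf : rename (Function.update id j i) f = 0) : X j - X i ∣ f := by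
  simpa [hf] using X_sub_X_dvd_sub_rename_update i j f

theorem degreeOf_X_sub_X [Nontrivial R] [DecidableEq σ] {i j : σ} (hij : i ≠ j) (n : σ) :
    degreeOf n (X j - X i : MvPolynomial σ R) =
      (if n = j then 1 else 0) + if n = i then 1 else 0 := by
  rw [degreeOf_def, sub_eq_add_neg, degrees_add_of_disjoint (by simp [degrees_X, hij]),
    degrees_neg, degrees_X, degrees_X]
  by_cases n = j <;> by_cases n = i <;> simp_all

section Alternant

open Matrix Equiv

variable {N : ℕ}

noncomputable def alternantMatrix (g : Fin N → Polynomial R) :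
    Matrix (Fin N) (Fin N) (MvPolynomial (Fin N) R) :=
  of fun j k => (g k).toMvPolynomial j

noncomputable def alternant (g : Fin N → Polynomial R) : MvPolynomial (Fin N) R :=
  (alternantMatrix g).det

variable (R N) in
noncomputable def vandermondePoly : MvPolynomial (Fin N) R :=
  alternant fun k : Fin N => Polynomial.X ^ (k : ℕ)

theorem eval_alternant (g : Fin N → Polynomial R) (x : Fin N → R) :
    eval x (alternant g) = (of fun j k => (g k).eval (x j)).det := by
  rw [alternant, RingHom.map_det]
  congr 1
  ext j k
  simp [alternantMatrix]

theorem rename_alternant (g : Fin N → Polynomial R) (f : Fin N → Fin N) :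
    rename f (alternant g) = ((alternantMatrix g).submatrix f id).det := by
  rw [alternant, AlgHom.map_det]
  congr 1
  ext j k
  simp [alternantMatrix]

theorem rename_perm_alternant (g : Fin N → Polynomial R) (e : Perm (Fin N)) :
    rename e (alternant g) = Perm.sign e * alternant g := by
  rw [rename_alternant, det_permute, alternant]

theorem rename_update_alternant (g : Fin N → Polynomial R) {i j : Fin N} (hij : i ≠ j) :
    rename (Function.update id j i) (alternant g) = 0 := by
  rw [rename_alternant]
  exact det_zero_of_row_eq hij (by ext k; simp [Function.update_of_ne hij])

theorem vandermondePoly_eq_det : vandermondePoly R N = (vandermonde X).det := by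
  rw [vandermondePoly, alternant]
  congr 1
  ext j k
  simp [alternantMatrix]

theorem eval_vandermondePoly (x : Fin N → R) :
    eval x (vandermondePoly R N) = (vandermonde x).det := by
  rw [vandermondePoly, eval_alternant]
  congr 1
  ext j k
  simp

theorem vandermondePoly_eq_prod :
    vandermondePoly R N = ∏ i : Fin N, ∏ j ∈ Finset.Ioi i, (X j - X i) := by
  rw [vandermondePoly_eq_det, det_vandermonde]

theorem vandermondePoly_dvd_alternant [IsDomain R] (g : Fin N → Polynomial R) :
    vandermondePoly R N ∣ alternant g := by
  rw [vandermondePoly_eq_prod, Finset.prod_sigma']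
  refine Finset.prod_dvd_of_map_eq_zero
    (φ := fun p => (rename (Function.update id p.2 p.1)).toRingHom)
    (fun p _ f hf => X_sub_X_dvd_of_rename_update_eq_zero hf) ?_
    (fun p hp => rename_update_alternant g (Finset.mem_Ioi.mp (Finset.mem_sigma.mp hp).2).ne)
  rintro ⟨a, b⟩ hab ⟨c, d⟩ hcd hne
  simp only [Finset.mem_sigma, Finset.mem_univ, Finset.mem_Ioi, true_and] at hab hcd
  simp only [ne_eq, Sigma.mk.injEq, heq_eq_eq, not_and] at hne
  simp only [AlgHom.toRingHom_eq_coe, RingHom.coe_coe, map_sub, rename_X, ne_eq, sub_eq_zero,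
    X_injective.eq_iff, Function.update_apply, id]
  split_ifs <;> grind

theorem vandermondePoly_ne_zero [IsDomain R] : vandermondePoly R N ≠ 0 := by
  rw [vandermondePoly_eq_det, det_vandermonde_ne_zero_iff]
  exact X_injective

theorem isSymmetric_of_alternant_eq_mul [IsDomain R] {g : Fin N → Polynomial R}
    {Q : MvPolynomial (Fin N) R} (hQ : alternant g = vandermondePoly R N * Q) :
    Q.IsSymmetric := by
  intro e
  have hsign : (Perm.sign e : MvPolynomial (Fin N) R) * vandermondePoly R N ≠ 0 :=
    mul_ne_zero (by rcases Int.units_eq_one_or (Perm.sign e) with h | h <;> simp [h])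
      vandermondePoly_ne_zero
  refine mul_left_cancel₀ hsign ?_
  have := congrArg (rename e) hQ
  rw [rename_perm_alternant, map_mul, vandermondePoly, rename_perm_alternant, ← vandermondePoly,
    hQ] at this
  rw [← this]
  ring

theorem degreeOf_toMvPolynomial_le [DecidableEq σ] (p : Polynomial R) (j n : σ) :
    degreeOf n (p.toMvPolynomial j) ≤ if n = j then p.natDegree else 0 := by
  rw [Polynomial.toMvPolynomial, Polynomial.aeval_eq_sum_range]
  refine (degreeOf_sum_le _ _ _).trans (Finset.sup_le fun k hk => ?_)
  rw [smul_eq_C_mul]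
  refine (degreeOf_C_mul_le _ _ _).trans ((degreeOf_pow_le _ _ _).trans ?_)
  split_ifs with h
  · subst h
    rcases subsingleton_or_nontrivial R with _ | _
    · simp [Subsingleton.elim (X n : MvPolynomial σ R) 0]
    · simpa using Finset.mem_range_succ_iff.mp hk
  · simp [degreeOf_X_of_ne h]

theorem degreeOf_alternant_le {g : Fin N → Polynomial R} {d : ℕ}
    (hg : ∀ k, (g k).natDegree ≤ d) (n : Fin N) : degreeOf n (alternant g) ≤ d := by
  rw [alternant, det_apply']
  refine (degreeOf_sum_le _ _ _).trans (Finset.sup_le fun e _ => ?_)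
  refine (degreeOf_mul_le _ _ _).trans ?_
  rw [← map_intCast (C : R →+* MvPolynomial (Fin N) R), degreeOf_C, zero_add]
  refine (degreeOf_prod_le _ _ _).trans ?_
  calc ∑ k, degreeOf n (alternantMatrix g (e k) k)
      ≤ ∑ k, if n = e k then d else 0 := Finset.sum_le_sum fun k _ =>
        (degreeOf_toMvPolynomial_le _ _ _).trans (by split_ifs; exacts [hg k, le_rfl])
    _ = d := by simp [eq_comm (a := n), ← Equiv.eq_symm_apply]

theorem degreeOf_vandermondePoly [IsDomain R] (n : Fin N) :
    degreeOf n (vandermondePoly R N) = N - 1 := by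
  have hX (i j : Fin N) (h : i < j) : (X j - X i : MvPolynomial (Fin N) R) ≠ 0 :=
    sub_ne_zero.mpr (X_injective.ne h.ne')
  rw [vandermondePoly_eq_prod, degreeOf_prod_eq _ _ fun i _ =>
    Finset.prod_ne_zero_iff.mpr fun j hj => hX i j (Finset.mem_Ioi.mp hj)]
  rw [Finset.sum_congr rfl fun i _ =>
    degreeOf_prod_eq _ _ fun j hj => hX i j (Finset.mem_Ioi.mp hj)]
  rw [Finset.sum_congr rfl fun i _ => Finset.sum_congr rfl fun j hj =>
    degreeOf_X_sub_X (Finset.mem_Ioi.mp hj).ne n]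
  simp [Finset.sum_add_distrib, Finset.filter_gt_eq_Iio]
  omega

theorem degreeOf_le_of_alternant_eq_mul [IsDomain R] {g : Fin N → Polynomial R} {d : ℕ}
    {Q : MvPolynomial (Fin N) R} (hg : ∀ k, (g k).natDegree ≤ N - 1 + d)
    (hQ : alternant g = vandermondePoly R N * Q) (n : Fin N) : degreeOf n Q ≤ d := by
  rcases eq_or_ne Q 0 with rfl | hQ0
  · simp
  have := degreeOf_alternant_le hg n
  rw [hQ, degreeOf_mul_eq vandermondePoly_ne_zero hQ0, degreeOf_vandermondePoly] at this
  omega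

/-- Substituting the constants `a ≠ b` for `X i₁, X i₂` keeps `V` nonzero, while it turns
`V * Q` into the zero polynomial; hence it turns `Q` into zero. -/
theorem eval_eq_zero_of_vandermondePoly_mul {K : Type*} [CommRing K] [IsDomain K] [Infinite K]
    {Q : MvPolynomial (Fin N) K} {i₁ i₂ : Fin N} (h12 : i₁ ≠ i₂) {a b : K} (hab : a ≠ b)
    (h : ∀ z : Fin N → K, z i₁ = a → z i₂ = b → eval z (vandermondePoly K N * Q) = 0)
    {x : Fin N → K} (hx1 : x i₁ = a) (hx2 : x i₂ = b) : eval x Q = 0 := by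
  set φ : Fin N → MvPolynomial (Fin N) K :=
    Function.update (Function.update X i₁ (C a)) i₂ (C b)
  have eval_bind₁_φ (z : Fin N → K) (f : MvPolynomial (Fin N) K) :
      eval z (bind₁ φ f) = eval (Function.update (Function.update z i₁ a) i₂ b) f := by
    rw [show eval z (bind₁ φ f) = eval (fun i => eval z (φ i)) f from
      eval₂Hom_bind₁ _ _ _ _]
    congr 2
    funext i
    simp only [φ, Function.update_apply]
    split_ifs <;> simp
  have hφ : Function.Injective φ := by
    have hXC (m : Fin N) (c : K) : (X m : MvPolynomial (Fin N) K) ≠ C c := fun h => by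
      simpa using congrArg totalDegree h
    intro u v huv
    simp only [φ, Function.update_apply] at huv
    split_ifs at huv <;> grind [X_injective, C_inj]
  have hV : bind₁ φ (vandermondePoly K N) ≠ 0 := by
    rw [vandermondePoly_eq_det, AlgHom.map_det]
    convert det_vandermonde_ne_zero_iff.mpr hφ
    ext j k
    simp
  have hVQ : bind₁ φ (vandermondePoly K N * Q) = 0 :=
    MvPolynomial.funext fun z => by
      rw [eval_bind₁_φ, map_zero]
      exact h _ (by simp [Function.update_of_ne h12]) (by simp)
  rw [map_mul] at hVQ
  have := congrArg (eval x) ((mul_eq_zero.mp hVQ).resolve_left hV)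
  rwa [eval_bind₁_φ, ← hx1, ← hx2, Function.update_eq_self, Function.update_eq_self,
    map_zero] at this

end Alternant

end MvPolynomial

namespace SixVertexTrig

open Polynomial

variable {N : ℕ} {q : ℂ} {y : Fin N → ℂ}

variable (N q y) in
noncomputable def aTilPoly : ℂ[X] := ∏ k, (C q * X - C (q⁻¹ * y k))

variable (N y) in
noncomputable def dTilPoly : ℂ[X] := ∏ k, (X - C (y k))

variable (N q y) in
noncomputable def trigColumn (k : Fin N) : ℂ[X] :=
  X ^ (k : ℕ) * (aTilPoly N q y - C (q ^ (2 - (N : ℤ)) * q ^ (2 * (k : ℕ))) * dTilPoly N y)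

theorem eval_trigColumn (k : Fin N) (t : ℂ) :
    (trigColumn N q y k).eval t =
      t ^ (k : ℕ) * (aTil N q y t - q ^ (2 - (N : ℤ)) * q ^ (2 * (k : ℕ)) * dTil N y t) := by
  simp [trigColumn, aTilPoly, dTilPoly, aTil, dTil, eval_prod]

theorem aTilPoly_eq_C_mul_prod (hq : q ≠ 0) :
    aTilPoly N q y = C (q ^ N) * ∏ k, (X - C ((q ^ 2)⁻¹ * y k)) := by
  have (k : Fin N) : C q * X - C (q⁻¹ * y k) = C q * (X - C ((q ^ 2)⁻¹ * y k)) := by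
    rw [mul_sub, ← C_mul]
    congr 2
    field_simp
  simp only [aTilPoly, this, Finset.prod_mul_distrib, Finset.prod_const, Finset.card_univ,
    Fintype.card_fin, C_pow]

theorem natDegree_trigColumn_le (hq : q ≠ 0) (k : Fin N) :
    (trigColumn N q y k).natDegree ≤ N - 1 + (N - 1) := by
  have hmonic (a : Fin N → ℂ) : (∏ m, (X - C (a m))).Monic :=
    monic_prod_of_monic _ _ fun m _ => monic_X_sub_C (a m)
  have hdeg (a : Fin N → ℂ) : (∏ m, (X - C (a m))).natDegree = N := by
    rw [natDegree_prod_of_monic _ _ fun m _ => monic_X_sub_C (a m)]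
    simp
  refine natDegree_mul_le.trans ?_
  rw [natDegree_X_pow]
  rcases (Nat.le_sub_one_of_lt k.isLt).eq_or_lt with hk | hk
  · have hc : q ^ (2 - (N : ℤ)) * q ^ (2 * (k : ℕ)) = q ^ N := by
      rw [hk, ← zpow_natCast, ← zpow_natCast, ← zpow_add₀ hq]
      congr 1
      omega
    rw [hc, aTilPoly_eq_C_mul_prod hq, dTilPoly, ← mul_sub]
    have := (natDegree_C_mul_le (q ^ N) _).trans
      ((hmonic fun m => (q ^ 2)⁻¹ * y m).natDegree_sub_le_pred (hmonic y) (hdeg _) (hdeg y))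
    omega
  · have hA : (aTilPoly N q y).natDegree ≤ N := by
      rw [aTilPoly_eq_C_mul_prod hq]
      exact (natDegree_C_mul_le _ _).trans (hdeg _).le
    have := natDegree_sub_le_of_le hA
      ((natDegree_C_mul_le (q ^ (2 - (N : ℤ)) * q ^ (2 * (k : ℕ))) (dTilPoly N y)).trans
        (hdeg y).le)
    rw [max_self] at this
    omega

theorem dTil_self (j : Fin N) : dTil N y (y j) = 0 :=
  Finset.prod_eq_zero (Finset.mem_univ j) (sub_self _)

theorem aTil_inv_sq_mul_self (hq : q ≠ 0) (j : Fin N) : aTil N q y ((q ^ 2)⁻¹ * y j) = 0 :=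
  Finset.prod_eq_zero (Finset.mem_univ j) (by field_simp; ring)

theorem eval_alternant_trigColumn_eq_zero (hq : q ≠ 0) {t i₁ i₂ : Fin N} (h12 : i₁ ≠ i₂)
    {z : Fin N → ℂ} (hz1 : z i₁ = y t) (hz2 : z i₂ = (q ^ 2)⁻¹ * y t) :
    MvPolynomial.eval z (MvPolynomial.alternant (trigColumn N q y)) = 0 := by
  rw [MvPolynomial.eval_alternant]
  refine Matrix.det_eq_zero_of_row_eq_smul_of_row_eq_smul h12 (v := fun k => y t ^ (k : ℕ))
    (α := aTil N q y (y t)) (β := -(q ^ (2 - (N : ℤ)) * dTil N y ((q ^ 2)⁻¹ * y t))) ?_ ?_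
  · ext k
    simp [eval_trigColumn, hz1, dTil_self, mul_comm]
  · ext k
    have hpow : ((q ^ 2)⁻¹ * y t) ^ (k : ℕ) * q ^ (2 * (k : ℕ)) = y t ^ (k : ℕ) := by
      rw [mul_pow, pow_mul, inv_pow, mul_right_comm, inv_mul_cancel₀ (by positivity), one_mul]
    simp only [Matrix.of_apply, eval_trigColumn, hz2, aTil_inv_sq_mul_self hq, Pi.smul_apply,
      smul_eq_mul]
    linear_combination (-(q ^ (2 - (N : ℤ)) * dTil N y ((q ^ 2)⁻¹ * y t))) * hpow

theorem eval_alternant_trigColumn_self :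
    MvPolynomial.eval y (MvPolynomial.alternant (trigColumn N q y)) =
      (∏ j, aTil N q y (y j)) * (Matrix.vandermonde y).det := by
  rw [MvPolynomial.eval_alternant, ← Matrix.det_mul_column]
  congr 1
  ext j k
  simp [eval_trigColumn, dTil_self, Matrix.vandermonde_apply, mul_comm]

theorem of_pval_eq_vandermonde_mul (p : Matrix (Fin N) (Fin N) ℂ) (x : Fin N → ℂ) :
    Matrix.of (fun j k => pval p k (x j)) = Matrix.vandermonde x * p.transpose := by
  ext j k
  simp [pval, Matrix.mul_apply, Matrix.vandermonde_apply, mul_comm]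

theorem of_pval_aTil_sub_eq_mul (p : Matrix (Fin N) (Fin N) ℂ) (x : Fin N → ℂ) :
    Matrix.of (fun j k => pval p k (x j) * aTil N q y (x j) -
        q ^ (2 - (N : ℤ)) * pval p k (q ^ 2 * x j) * dTil N y (x j)) =
      Matrix.of (fun j k => (trigColumn N q y k).eval (x j)) * p.transpose := by
  ext j k
  simp only [Matrix.of_apply, Matrix.mul_apply, Matrix.transpose_apply, pval, eval_trigColumn,
    Finset.sum_mul, Finset.mul_sum, ← Finset.sum_sub_distrib]
  refine Finset.sum_congr rfl fun m _ => ?_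
  rw [mul_pow, pow_mul]
  ring

theorem inv_prod_mul_prod_aTil_self (hy0 : ∀ j, y j ≠ 0) :
    (∏ k, y k)⁻¹ * ∏ j, aTil N q y (y j) =
      (q - q⁻¹) ^ N * ∏ j, ∏ k ∈ Finset.univ.erase j, (q * y j - q⁻¹ * y k) := by
  have (j : Fin N) : aTil N q y (y j) =
      y j * ((q - q⁻¹) * ∏ k ∈ Finset.univ.erase j, (q * y j - q⁻¹ * y k)) := by
    rw [aTil, ← Finset.mul_prod_erase _ _ (Finset.mem_univ j)]
    ring
  simp only [this, Finset.prod_mul_distrib, Finset.prod_const, Finset.card_univ,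
    Fintype.card_fin]
  rw [← mul_assoc, inv_mul_cancel₀ (Finset.prod_ne_zero_iff.mpr fun j _ => hy0 j), one_mul]

end SixVertexTrig

open MvPolynomial

open SixVertexTrig in
theorem trig_det_representation_first_general (N : ℕ) (q : ℂ) (hq : q ≠ 0)
    (hq2 : q ^ 2 ≠ 1) (y : Fin N → ℂ) (hy0 : ∀ j, y j ≠ 0)
    (hy : Function.Injective y)
    (p : Matrix (Fin N) (Fin N) ℂ) :
    ∃ P : MvPolynomial (Fin N) ℂ, TrigCond N q y P ∧
      ∀ x : Fin N → ℂ,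
        MvPolynomial.eval x P * (∏ k, y k) *
            Matrix.det (Matrix.of fun j k : Fin N => pval p k (x j)) =
          Matrix.det (Matrix.of fun j k : Fin N =>
            pval p k (x j) * aTil N q y (x j) -
              q ^ (2 - (N : ℤ)) * pval p k (q ^ 2 * x j) * dTil N y (x j)) := by
  obtain ⟨Q, hQ⟩ := vandermondePoly_dvd_alternant (trigColumn N q y)
  have hQy : eval y Q = ∏ j, aTil N q y (y j) := by
    have := congrArg (eval y) hQ
    rw [eval_alternant_trigColumn_self, map_mul, eval_vandermondePoly, mul_comm] at this
    exact (mul_left_cancel₀ (Matrix.det_vandermonde_ne_zero_iff.mpr hy) this).symm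
  refine ⟨C (∏ k, y k)⁻¹ * Q, ⟨(IsSymmetric.C _).mul (isSymmetric_of_alternant_eq_mul hQ),
    fun n => (degreeOf_C_mul_le _ _ _).trans
      (degreeOf_le_of_alternant_eq_mul (natDegree_trigColumn_le hq) hQ n), ?_, ?_⟩, fun x => ?_⟩
  · intro t x i₁ i₂ h12 hx1 hx2
    have hne : y t ≠ (q ^ 2)⁻¹ * y t := fun h => hq2 <| by
      field_simp at h
      exact mul_left_cancel₀ (hy0 t) (h.trans (mul_one _).symm)
    rw [map_mul, eval_eq_zero_of_vandermondePoly_mul (Q := Q) h12 hne (fun z hz1 hz2 =>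
      hQ ▸ eval_alternant_trigColumn_eq_zero hq h12 hz1 hz2) hx1 hx2, mul_zero]
  · rw [map_mul, eval_C, hQy, inv_prod_mul_prod_aTil_self hy0]
  · rw [of_pval_eq_vandermonde_mul, of_pval_aTil_sub_eq_mul, Matrix.det_mul, Matrix.det_mul,
      ← eval_alternant, hQ, map_mul, map_mul, eval_C, eval_vandermondePoly]
    field_simp [Finset.prod_ne_zero_iff.mpr fun j _ => hy0 j]

open SixVertexTrig in
/-- determinant representation, trigonometric case, first form:
there is a polynomial `P` satisfying the trigonometric DWBC conditions with
`P(x) ⬝ (∏_k y_k) ⬝ det[p_k(x_j)] = det[p_k(x_j) ã(x_j) - q^{-N+2} p_k(q² x_j) d̃(x_j)]`. -/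
theorem trig_det_representation_first (N : ℕ) (hN : 1 ≤ N) (q : ℂ) (hq : q ≠ 0)
    (hq2 : q ^ 2 ≠ 1) (y : Fin N → ℂ) (hy0 : ∀ j, y j ≠ 0)
    (hy : Function.Injective y)
    (hyq : ∀ j k : Fin N, j ≠ k → q ^ 2 * y j ≠ y k)
    (p : Matrix (Fin N) (Fin N) ℂ) (hp : IsUnit p.det) :
    ∃ P : MvPolynomial (Fin N) ℂ, TrigCond N q y P ∧
      ∀ x : Fin N → ℂ,
        MvPolynomial.eval x P * (∏ k, y k) *
            Matrix.det (Matrix.of fun j k : Fin N => pval p k (x j)) =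
          Matrix.det (Matrix.of fun j k : Fin N =>
            pval p k (x j) * aTil N q y (x j) -
              q ^ (2 - (N : ℤ)) * pval p k (q ^ 2 * x j) * dTil N y (x j)) :=
  trig_det_representation_first_general N q hq hq2 y hy0 hy p
end

section
/- (Equality of the two trigonometric determinant forms.) Let q ∈ ℂ with q ≠ 0, let y_1,…,y_N ∈ ℂ be arbitrary, set ã(x) = ∏_{k=1}^N (q x − q^{−1} y_k) and d̃(x) = ∏_{k=1}^N (x − y_k), and let p_1,…,p_N ∈ ℂ[x] be any polynomials of degree at most N−1. Then for all x_1,…,x_N ∈ ℂ: (∏_{j=1}^N x_j) · det[ p_k(x_j) ã(x_j) − q^{−N+2} p_k(q² x_j) d̃(x_j) ]_{j,k=1,…,N} = (∏_{k=1}^N y_k) · det[ p_k(x_j) ã(x_j) − q^{−N} p_k(q² x_j) d̃(x_j) ]_{j,k=1,…,N}. -/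
open scoped BigOperators

namespace SixVertexTrig

noncomputable def vvAux (N : ℕ) (q : ℂ) (y : Fin N → ℂ) (m : ℕ) (t : ℂ) : ℂ :=
  t ^ m * aTil N q y t - q ^ (-(N : ℤ)) * (q ^ 2 * t) ^ m * dTil N y t

noncomputable def DDAux (N : ℕ) (y : Fin N → ℂ) : Polynomial ℂ :=
  ∏ k, (Polynomial.X - Polynomial.C (y k))

lemma DDAux_monic (N : ℕ) (y : Fin N → ℂ) : (DDAux N y).Monic :=
  Polynomial.monic_prod_of_monic _ _ fun k _ => Polynomial.monic_X_sub_C _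

lemma DDAux_natDegree (N : ℕ) (y : Fin N → ℂ) : (DDAux N y).natDegree = N := by
  rw [DDAux, Polynomial.natDegree_prod_of_monic]
  · simp [Polynomial.natDegree_X_sub_C]
  · exact fun k _ => Polynomial.monic_X_sub_C _

lemma DDAux_eval (N : ℕ) (y : Fin N → ℂ) (t : ℂ) :
    (DDAux N y).eval t = dTil N y t := by
  simp [DDAux, dTil, Polynomial.eval_prod]

lemma dTil_qsq (N : ℕ) (q : ℂ) (hq : q ≠ 0) (y : Fin N → ℂ) (t : ℂ) :
    dTil N y (q ^ 2 * t) = q ^ N * aTil N q y t := by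
  unfold dTil aTil
  rw [show (q:ℂ)^N = ∏ _k : Fin N, q by simp, ← Finset.prod_mul_distrib]
  apply Finset.prod_congr rfl
  intro k _
  field_simp

lemma keyAux (N : ℕ) (q : ℂ) (hq : q ≠ 0) (y : Fin N → ℂ) (t : ℂ) :
    ∑ m ∈ Finset.range (N + 1), (DDAux N y).coeff m * vvAux N q y m t = 0 := by
  have h1 : ∑ m ∈ Finset.range (N + 1), (DDAux N y).coeff m * t ^ m = dTil N y t := by
    rw [← DDAux_eval]
    exact (Polynomial.eval_eq_sum_range' (by rw [DDAux_natDegree]; omega) t).symm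
  have h2 : ∑ m ∈ Finset.range (N + 1), (DDAux N y).coeff m * (q ^ 2 * t) ^ m
      = q ^ N * aTil N q y t := by
    rw [← dTil_qsq N q hq, ← DDAux_eval]
    exact (Polynomial.eval_eq_sum_range' (by rw [DDAux_natDegree]; omega) _).symm
  have expand : ∀ m ∈ Finset.range (N + 1), (DDAux N y).coeff m * vvAux N q y m t =
      ((DDAux N y).coeff m * t ^ m) * aTil N q y t -
        q ^ (-(N : ℤ)) * ((DDAux N y).coeff m * (q ^ 2 * t) ^ m) * dTil N y t := by
    intro m _; simp only [vvAux]; ring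
  rw [Finset.sum_congr rfl expand, Finset.sum_sub_distrib, ← Finset.sum_mul]
  have : ∑ m ∈ Finset.range (N + 1),
      q ^ (-(N : ℤ)) * ((DDAux N y).coeff m * (q ^ 2 * t) ^ m) * dTil N y t
      = q ^ (-(N : ℤ)) * (∑ m ∈ Finset.range (N + 1),
          (DDAux N y).coeff m * (q ^ 2 * t) ^ m) * dTil N y t := by
    rw [Finset.mul_sum, Finset.sum_mul]
  have hzp : q ^ (-(N : ℤ)) = (q ^ N)⁻¹ := by
    rw [zpow_neg, zpow_natCast]
  rw [this, h1, h2, hzp]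
  have hqN : (q:ℂ) ^ N ≠ 0 := pow_ne_zero _ hq
  field_simp
  ring

lemma DDAux_coeff_zero (N : ℕ) (y : Fin N → ℂ) :
    (DDAux N y).coeff 0 = (-1) ^ N * ∏ k, y k := by
  rw [Polynomial.coeff_zero_eq_eval_zero, DDAux_eval]
  unfold dTil
  rw [show ((-1:ℂ))^N = ∏ _k : Fin N, (-1:ℂ) by simp, ← Finset.prod_mul_distrib]
  apply Finset.prod_congr rfl
  intro k _; ring

lemma entryR (N : ℕ) (q : ℂ) (y : Fin N → ℂ) (p : Matrix (Fin N) (Fin N) ℂ)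
    (k : Fin N) (t : ℂ) :
    pval p k t * aTil N q y t - q ^ (-(N : ℤ)) * pval p k (q ^ 2 * t) * dTil N y t
      = ∑ m : Fin N, vvAux N q y (m : ℕ) t * p k m := by
  simp only [pval, vvAux, Finset.sum_mul, Finset.mul_sum]
  rw [← Finset.sum_sub_distrib]
  apply Finset.sum_congr rfl
  intro m _; ring

lemma entryL (N : ℕ) (q : ℂ) (hq : q ≠ 0) (y : Fin N → ℂ) (p : Matrix (Fin N) (Fin N) ℂ)
    (k : Fin N) (t : ℂ) :
    t * (pval p k t * aTil N q y t - q ^ (2 - (N : ℤ)) * pval p k (q ^ 2 * t) * dTil N y t)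
      = ∑ m : Fin N, vvAux N q y ((m : ℕ) + 1) t * p k m := by
  have h2 : q ^ (2 - (N : ℤ)) = q ^ 2 * q ^ (-(N : ℤ)) := by
    rw [show (2 - (N : ℤ)) = 2 + (-(N : ℤ)) by ring, zpow_add₀ hq,
      show ((2:ℤ)) = ((2:ℕ):ℤ) by norm_num, zpow_natCast]
  rw [h2]
  simp only [pval, vvAux, Finset.sum_mul, Finset.mul_sum, mul_sub]
  rw [← Finset.sum_sub_distrib]
  apply Finset.sum_congr rfl
  intro m _; ring

lemma det_shift (n : ℕ) (q : ℂ) (hq : q ≠ 0) (y x : Fin (n + 1) → ℂ) :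
    Matrix.det (Matrix.of fun j m : Fin (n + 1) => vvAux (n + 1) q y ((m : ℕ) + 1) (x j))
      = (∏ k, y k) *
        Matrix.det (Matrix.of fun j m : Fin (n + 1) => vvAux (n + 1) q y (m : ℕ) (x j)) := by
  set σ : Equiv.Perm (Fin (n + 1)) := finRotate (n + 1) with hσ
  set A : Matrix (Fin (n + 1)) (Fin (n + 1)) ℂ :=
    Matrix.of fun j m : Fin (n + 1) => vvAux (n + 1) q y (m : ℕ) (x j) with hA
  set C : Matrix (Fin (n + 1)) (Fin (n + 1)) ℂ := A.transpose.submatrix σ id with hC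
  have hcN : (DDAux (n + 1) y).coeff (n + 1) = 1 := by
    have h := (DDAux_monic (n + 1) y).coeff_natDegree
    rwa [DDAux_natDegree] at h
  have hrel : ∀ t : ℂ, vvAux (n + 1) q y (n + 1) t
      = ∑ m : Fin (n + 1), -((DDAux (n + 1) y).coeff (m : ℕ)) * vvAux (n + 1) q y (m : ℕ) t := by
    intro t
    have hk := keyAux (n + 1) q hq y t
    rw [Finset.sum_range_succ, hcN, one_mul,
      ← Fin.sum_univ_eq_sum_range (fun m => (DDAux (n + 1) y).coeff m * vvAux (n + 1) q y m t)
        (n + 1)] at hk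
    have hneg : ∑ m : Fin (n + 1),
        -((DDAux (n + 1) y).coeff (m : ℕ)) * vvAux (n + 1) q y (m : ℕ) t
        = -∑ m : Fin (n + 1), (DDAux (n + 1) y).coeff (m : ℕ) * vvAux (n + 1) q y (m : ℕ) t := by
      simp [neg_mul]
    rw [hneg]
    linear_combination hk
  have hB : (Matrix.of fun j m : Fin (n + 1) => vvAux (n + 1) q y ((m : ℕ) + 1) (x j)).transpose
      = C.updateRow (Fin.last n)
          (∑ k : Fin (n + 1), (-((DDAux (n + 1) y).coeff ((σ k : Fin (n+1)) : ℕ))) • C k) := by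
    have hsum : (∑ k : Fin (n + 1),
        (-((DDAux (n + 1) y).coeff ((σ k : Fin (n+1)) : ℕ))) • C k)
        = fun j => vvAux (n + 1) q y (n + 1) (x j) := by
      have := Equiv.sum_comp σ
        (fun m : Fin (n + 1) =>
          (-((DDAux (n + 1) y).coeff (m : ℕ))) • (fun j => vvAux (n + 1) q y (m : ℕ) (x j)))
      funext j
      rw [Finset.sum_apply]
      have hCk : ∀ k : Fin (n+1), ((-((DDAux (n + 1) y).coeff ((σ k : Fin (n+1)) : ℕ))) • C k) j
          = -((DDAux (n + 1) y).coeff ((σ k : Fin (n+1)) : ℕ)) *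
              vvAux (n + 1) q y ((σ k : Fin (n+1)) : ℕ) (x j) := by
        intro k
        simp [hC, Matrix.submatrix_apply, Matrix.transpose_apply, hA, smul_eq_mul]
      rw [Finset.sum_congr rfl fun k _ => hCk k]
      rw [show (∑ k : Fin (n+1), -((DDAux (n + 1) y).coeff ((σ k : Fin (n+1)) : ℕ)) *
            vvAux (n + 1) q y ((σ k : Fin (n+1)) : ℕ) (x j))
          = ∑ m : Fin (n+1), -((DDAux (n + 1) y).coeff (m : ℕ)) *
            vvAux (n + 1) q y (m : ℕ) (x j) from
        Equiv.sum_comp σ (fun m : Fin (n+1) => -((DDAux (n + 1) y).coeff (m : ℕ)) *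
            vvAux (n + 1) q y (m : ℕ) (x j))]
      exact (hrel (x j)).symm
    rw [hsum]
    ext k j
    rcases eq_or_ne k (Fin.last n) with hk | hk
    · subst hk
      simp [Matrix.updateRow_self, Matrix.transpose_apply, Fin.val_last]
    · rw [Matrix.updateRow_ne hk]
      have hlt : k < Fin.last n := lt_of_le_of_ne (Fin.le_last k) hk
      have hval : ((σ k : Fin (n+1)) : ℕ) = (k : ℕ) + 1 := by
        rw [hσ, finRotate_succ_apply, Fin.val_add_one_of_lt hlt]
      simp [hC, Matrix.submatrix_apply, Matrix.transpose_apply, hA, hval]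
  rw [← Matrix.det_transpose
    (Matrix.of fun j m : Fin (n + 1) => vvAux (n + 1) q y ((m : ℕ) + 1) (x j)), hB,
    Matrix.det_updateRow_sum]
  have hclast : ((σ (Fin.last n) : Fin (n+1)) : ℕ) = 0 := by
    rw [hσ, finRotate_last]
    rfl
  rw [hclast, DDAux_coeff_zero]
  have hdetC : C.det = ((-1 : ℂ) ^ n) * A.det := by
    rw [hC, Matrix.det_permute, hσ, sign_finRotate, Matrix.det_transpose]
    push_cast
    ring
  rw [smul_eq_mul, hdetC]
  have hsign : -((-1 : ℂ) ^ (n + 1) * ∏ k, y k) * ((-1 : ℂ) ^ n * A.det)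
      = (∏ k, y k) * A.det := by
    have : ((-1 : ℂ)) ^ (n + 1) * ((-1 : ℂ)) ^ n = -1 := by
      rw [← pow_add]
      exact Odd.neg_one_pow ⟨n, by ring⟩
    calc -((-1 : ℂ) ^ (n + 1) * ∏ k, y k) * ((-1 : ℂ) ^ n * A.det)
        = -(((-1 : ℂ) ^ (n + 1) * (-1 : ℂ) ^ n) * ((∏ k, y k) * A.det)) := by ring
      _ = (∏ k, y k) * A.det := by rw [this]; ring
  exact hsign

end SixVertexTrig

open SixVertexTrig in
/-- equality of the two trigonometric determinant forms:
`(∏_j x_j) ⬝ det[p_k(x_j) ã(x_j) - q^{-N+2} p_k(q² x_j) d̃(x_j)]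
  = (∏_k y_k) ⬝ det[p_k(x_j) ã(x_j) - q^{-N} p_k(q² x_j) d̃(x_j)]`. -/
theorem trig_det_forms_equal (N : ℕ) (hN : 1 ≤ N) (q : ℂ) (hq : q ≠ 0)
    (y : Fin N → ℂ) (p : Matrix (Fin N) (Fin N) ℂ) (x : Fin N → ℂ) :
    (∏ j, x j) *
        Matrix.det (Matrix.of fun j k : Fin N =>
          pval p k (x j) * aTil N q y (x j) -
            q ^ (2 - (N : ℤ)) * pval p k (q ^ 2 * x j) * dTil N y (x j)) =
      (∏ k, y k) *
        Matrix.det (Matrix.of fun j k : Fin N =>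
          pval p k (x j) * aTil N q y (x j) -
            q ^ (-(N : ℤ)) * pval p k (q ^ 2 * x j) * dTil N y (x j)) := by
  obtain ⟨n, rfl⟩ : ∃ n, N = n + 1 := ⟨N - 1, by omega⟩
  have step1 := Matrix.det_mul_column x (Matrix.of fun j k : Fin (n + 1) =>
    pval p k (x j) * aTil (n + 1) q y (x j) -
      q ^ (2 - ((n + 1 : ℕ) : ℤ)) * pval p k (q ^ 2 * x j) * dTil (n + 1) y (x j))
  rw [← step1]
  have hL : (Matrix.of fun i j : Fin (n + 1) => x i *
        (Matrix.of fun j k : Fin (n + 1) =>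
          pval p k (x j) * aTil (n + 1) q y (x j) -
            q ^ (2 - ((n + 1 : ℕ) : ℤ)) * pval p k (q ^ 2 * x j) * dTil (n + 1) y (x j)) i j)
      = (Matrix.of fun j m : Fin (n + 1) => vvAux (n + 1) q y ((m : ℕ) + 1) (x j))
          * p.transpose := by
    ext j k
    simp only [Matrix.of_apply, Matrix.mul_apply, Matrix.transpose_apply]
    exact entryL (n + 1) q hq y p k (x j)
  have hR : (Matrix.of fun j k : Fin (n + 1) =>
        pval p k (x j) * aTil (n + 1) q y (x j) -
          q ^ (-((n + 1 : ℕ) : ℤ)) * pval p k (q ^ 2 * x j) * dTil (n + 1) y (x j))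
      = (Matrix.of fun j m : Fin (n + 1) => vvAux (n + 1) q y (m : ℕ) (x j))
          * p.transpose := by
    ext j k
    simp only [Matrix.of_apply, Matrix.mul_apply, Matrix.transpose_apply]
    exact entryR (n + 1) q y p k (x j)
  rw [hL, hR, Matrix.det_mul, Matrix.det_mul, det_shift n q hq y x]
  ring
end
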